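/- Let g₁, g₂, h₁, h₂ : S → ℝ be functions on a finite set S of size m. For each pair (p, q) ∈ S² for which the equation λ·g₁(p) + (1−λ)·g₂(p) = λ·g₁(q) + (1−λ)·g₂(q) has a unique solution λ ∈ [0,1], record that solution as a threshold. Then the set of λ ∈ [0,1] at which the total (pre)order on S induced by λ·g₁ + (1−λ)·g₂ changes is contained in this set of at most binom(m,2) thresholds; in particular, [0,1] is partitioned into at most binom(m,2) + 1 intervals on each of which the induced ordering of S is constant. -/

import Mathlib

/-!
For a pair `p ≠ q` the score difference `λ ↦ s_λ p - s_λ q` is affine in `λ`, so its sign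
can only change at its root. Taking as thresholds the roots of the `binom(m,2)` unordered pairs
that lie in `[0,1]`, a subinterval of `[0,1]` free of thresholds contains no root at all, so
every comparison `s_λ p ≤ s_λ q` is the same at both of its endpoints.
-/

open Set

lemma mul_sub_nonpos_iff_of_notMem_Icc {c r x y : ℝ} (hxy : x ≤ y) (hr : r ∉ Icc x y) :
    c * (x - r) ≤ 0 ↔ c * (y - r) ≤ 0 := by
  rw [mem_Icc, not_and_or, not_le, not_le] at hr
  rcases hr with hr | hr
  · have hx : 0 < x - r := by linarith
    have hy : 0 < y - r := by linarith
    simp [mul_nonpos_iff, hx.le, hy.le, hx.not_ge, hy.not_ge]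
  · have hx : x - r < 0 := by linarith
    have hy : y - r < 0 := by linarith
    simp [mul_nonpos_iff, hx.le, hy.le, hx.not_ge, hy.not_ge]

/-- The root of `λ ↦ λ a + (1 - λ) b`; the junk value `b / 0 = 0` when `a = b` is harmless. -/
noncomputable def interpRoot (a b : ℝ) : ℝ := b / (b - a)

lemma interp_nonpos_iff_of_interpRoot_notMem {a b l μ : ℝ} (hlμ : l ≤ μ)
    (h : interpRoot a b ∉ Icc l μ) :
    l * a + (1 - l) * b ≤ 0 ↔ μ * a + (1 - μ) * b ≤ 0 := by
  by_cases hab : a = b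
  · subst hab
    ring_nf
  · have hfactor : ∀ x : ℝ, x * a + (1 - x) * b = (a - b) * (x - interpRoot a b) := by
      intro x
      have : b - a ≠ 0 := sub_ne_zero.2 (Ne.symm hab)
      rw [interpRoot]
      field_simp
      ring
    rw [hfactor, hfactor]
    exact mul_sub_nonpos_iff_of_notMem_Icc hlμ h

section Thresholds

variable {S : Type*} (g1 g2 : S → ℝ)

/-- The value of `λ` at which the scores `λ g₁ + (1 - λ) g₂` of `p` and `q` coincide. -/
noncomputable def crossing (p q : S) : ℝ := interpRoot (g1 p - g1 q) (g2 p - g2 q)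

lemma crossing_comm (p q : S) : crossing g1 g2 p q = crossing g1 g2 q p := by
  simp only [crossing, interpRoot]
  rw [← neg_div_neg_eq]
  ring_nf

lemma score_le_score_iff_of_crossing_notMem {p q : S} {l μ : ℝ} (hlμ : l ≤ μ)
    (h : crossing g1 g2 p q ∉ Icc l μ) :
    l * g1 p + (1 - l) * g2 p ≤ l * g1 q + (1 - l) * g2 q ↔
      μ * g1 p + (1 - μ) * g2 p ≤ μ * g1 q + (1 - μ) * g2 q := by
  have hdiff : ∀ x : ℝ, x * g1 p + (1 - x) * g2 p ≤ x * g1 q + (1 - x) * g2 q ↔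
      x * (g1 p - g1 q) + (1 - x) * (g2 p - g2 q) ≤ 0 := fun x => by
    rw [← sub_nonpos]
    ring_nf
  rw [hdiff, hdiff]
  exact interp_nonpos_iff_of_interpRoot_notMem hlμ h

noncomputable def pairCrossing : Sym2 S → ℝ :=
  Sym2.lift ⟨crossing g1 g2, crossing_comm g1 g2⟩

variable [Fintype S]

open Classical in
noncomputable def thresholds : Finset ℝ :=
  (Finset.univ.image fun s : {s : Sym2 S // ¬ s.IsDiag} => pairCrossing g1 g2 s).filter
    (· ∈ Icc 0 1)

lemma card_thresholds_le : (thresholds g1 g2).card ≤ (Fintype.card S).choose 2 := by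
  classical
  calc (thresholds g1 g2).card
      ≤ (Finset.univ : Finset {s : Sym2 S // ¬ s.IsDiag}).card :=
        (Finset.card_filter_le _ _).trans Finset.card_image_le
    _ = (Fintype.card S).choose 2 := by
        rw [Finset.card_univ, ← Sym2.card_subtype_not_diag]

lemma thresholds_subset_Icc : (thresholds g1 g2 : Set ℝ) ⊆ Icc 0 1 :=
  fun _ ht => (Finset.mem_filter.1 ht).2

lemma crossing_mem_thresholds {p q : S} (hpq : p ≠ q) (h : crossing g1 g2 p q ∈ Icc 0 1) :
    crossing g1 g2 p q ∈ thresholds g1 g2 := by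
  classical
  have hoff : ¬ s(p, q).IsDiag := by simpa using hpq
  exact Finset.mem_filter.2
    ⟨Finset.mem_image.2 ⟨⟨s(p, q), hoff⟩, Finset.mem_univ _, rfl⟩, h⟩

end Thresholds

/-- For scores `s_l p = l * g₁ p + (1-l) * g₂ p` on a finite set `S` of size `m`, there is a set
of at most `binom(m,2)` thresholds in `[0,1]` such that on any subinterval of `[0,1]` containing
no threshold, the induced total preorder on `S` is constant. -/
theorem stmt8 {S : Type*} [Fintype S] (m : ℕ) (hm : Fintype.card S = m)
    (g1 g2 : S → ℝ) :
    ∃ Th : Finset ℝ, Th.card ≤ m.choose 2 ∧ (↑Th : Set ℝ) ⊆ Set.Icc 0 1 ∧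
      ∀ l mu : ℝ, l ∈ Set.Icc (0:ℝ) 1 → mu ∈ Set.Icc (0:ℝ) 1 → l ≤ mu →
        (∀ t ∈ Th, t ∉ Set.Icc l mu) →
        ∀ p q : S,
          (l * g1 p + (1 - l) * g2 p ≤ l * g1 q + (1 - l) * g2 q ↔
           mu * g1 p + (1 - mu) * g2 p ≤ mu * g1 q + (1 - mu) * g2 q) := by
  refine ⟨thresholds g1 g2, hm ▸ card_thresholds_le g1 g2, thresholds_subset_Icc g1 g2, ?_⟩
  intro l mu hl hmu hlmu hTh p q
  by_cases hpq : p = q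
  · subst hpq
    simp
  apply score_le_score_iff_of_crossing_notMem g1 g2 hlmu
  intro hc
  exact hTh _ (crossing_mem_thresholds g1 g2 hpq ⟨hl.1.trans hc.1, hc.2.trans hmu.2⟩) hc
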